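/- Under the construction hypotheses (a distributive lattice D, groups G_α, and transitive isomorphisms φ_{α,β} for β ≤ α with ψ = φ^{-1}), the multiplicative semigroup (S, ·) on S = Σ_{α∈D} G_α is a Clifford semigroup: every element x ∈ S is regular (there exists y ∈ S with x·y·x = x), and every multiplicative idempotent of S is central (e·x = x·e for every idempotent e and every x ∈ S). -/

import Mathlib

variable {D : Type*} [DistribLattice D] {G : D → Type*} [∀ α : D, Group (G α)]

/-- Multiplication on the disjoint union `S = Σ α, G α`:
`(α, x) · (β, y) = (αβ, φ_{α,αβ}(x) · φ_{β,αβ}(y))`. -/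
def cMul (φ : ∀ α β : D, β ≤ α → (G α ≃* G β)) (s t : Σ α : D, G α) :
    Σ α : D, G α :=
  ⟨s.1 ⊓ t.1,
    φ s.1 (s.1 ⊓ t.1) inf_le_left s.2 * φ t.1 (s.1 ⊓ t.1) inf_le_right t.2⟩

/-- Addition on the disjoint union `S = Σ α, G α`:
`(α, x) + (β, y) = (α + β, ψ_{α,α+β}(x))`, where `ψ_{β,α} = (φ_{α,β})⁻¹`
for `β ≤ α` (each `G α` carries the left-zero addition). -/
def cAdd (φ : ∀ α β : D, β ≤ α → (G α ≃* G β)) (s t : Σ α : D, G α) :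
    Σ α : D, G α :=
  ⟨s.1 ⊔ t.1, (φ (s.1 ⊔ t.1) s.1 le_sup_left).symm s.2⟩

/-!
An idempotent `(ε, u)` gives `u * u = u` in `G ε`, so the idempotents are exactly the identities
`(ε, 1)`. Multiplying `(α, x)` by `(ε, 1)` on either side just maps `x` into `G (ε ⊓ α)`, which is
symmetric in `ε` and `α`; hence idempotents are central. `(α, x⁻¹)` is an inverse of `(α, x)`.
-/

section CliffordConstruction

variable (φ : ∀ α β : D, β ≤ α → (G α ≃* G β))

theorem sigma_mk_map_congr {α β γ : D} (h : β = γ) (hβ : β ≤ α) (hγ : γ ≤ α) (x : G α) :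
    (⟨β, φ α β hβ x⟩ : Σ α : D, G α) = ⟨γ, φ α γ hγ x⟩ := by
  subst h
  rfl

theorem sigma_mk_map_of_eq (hφ_id : ∀ (α : D) (x : G α), φ α α le_rfl x = x)
    {α β : D} (h : β = α) (hβ : β ≤ α) (x : G α) :
    (⟨β, φ α β hβ x⟩ : Σ α : D, G α) = ⟨α, x⟩ := by
  rw [sigma_mk_map_congr φ h hβ le_rfl, hφ_id]

theorem cMul_mk_one_left (α β : D) (x : G α) :
    cMul φ ⟨β, 1⟩ ⟨α, x⟩ = ⟨β ⊓ α, φ α (β ⊓ α) inf_le_right x⟩ := by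
  simp only [cMul, map_one, one_mul]

theorem cMul_mk_one_right (α β : D) (x : G α) :
    cMul φ ⟨α, x⟩ ⟨β, 1⟩ = ⟨α ⊓ β, φ α (α ⊓ β) inf_le_left x⟩ := by
  simp only [cMul, map_one, mul_one]

theorem cMul_mk_mul_inv (α : D) (x : G α) : cMul φ ⟨α, x⟩ ⟨α, x⁻¹⟩ = ⟨α ⊓ α, 1⟩ := by
  simp only [cMul, map_inv, mul_inv_cancel]

theorem cMul_mk_one_comm (ε : D) (s : Σ α : D, G α) :
    cMul φ ⟨ε, 1⟩ s = cMul φ s ⟨ε, 1⟩ := by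
  rw [cMul_mk_one_left, cMul_mk_one_right]
  exact sigma_mk_map_congr φ (inf_comm _ _) _ _ s.2

theorem cMul_mk_mul_inv_mul (hφ_id : ∀ (α : D) (x : G α), φ α α le_rfl x = x)
    (α : D) (x : G α) : cMul φ (cMul φ ⟨α, x⟩ ⟨α, x⁻¹⟩) ⟨α, x⟩ = ⟨α, x⟩ := by
  rw [cMul_mk_mul_inv, cMul_mk_one_left]
  exact sigma_mk_map_of_eq φ hφ_id (by simp) _ x

theorem eq_one_of_cMul_mk_self (hφ_id : ∀ (α : D) (x : G α), φ α α le_rfl x = x)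
    {ε : D} {u : G ε} (he : cMul φ ⟨ε, u⟩ ⟨ε, u⟩ = ⟨ε, u⟩) : u = 1 := by
  have hsq : φ ε (ε ⊓ ε) inf_le_left u * φ ε (ε ⊓ ε) inf_le_left u =
      φ ε (ε ⊓ ε) inf_le_left u :=
    sigma_mk_injective (he.trans (sigma_mk_map_of_eq φ hφ_id (inf_idem ε) inf_le_left u).symm)
  exact (MulEquiv.map_eq_one_iff _).mp (mul_eq_right.mp hsq)

end CliffordConstruction

theorem construction_mul_clifford_general
    (φ : ∀ α β : D, β ≤ α → (G α ≃* G β))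
    (hφ_id : ∀ (α : D) (x : G α), φ α α le_rfl x = x)
    :
    (∀ x : Σ α : D, G α, ∃ y : Σ α : D, G α, cMul φ (cMul φ x y) x = x) ∧
    (∀ e : Σ α : D, G α, cMul φ e e = e →
      ∀ x : Σ α : D, G α, cMul φ e x = cMul φ x e) := by
  refine ⟨fun ⟨α, x⟩ => ⟨⟨α, x⁻¹⟩, cMul_mk_mul_inv_mul φ hφ_id α x⟩, ?_⟩
  rintro ⟨ε, u⟩ he s
  obtain rfl := eq_one_of_cMul_mk_self φ hφ_id he
  exact cMul_mk_one_comm φ ε s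

/-- Under the construction hypotheses, the multiplicative
semigroup `(S, ·)` on `S = Σ α, G α` is a Clifford semigroup: every element
`x ∈ S` is regular (there is `y ∈ S` with `x·y·x = x`), and every
multiplicative idempotent of `S` is central. -/
theorem construction_mul_clifford
    (φ : ∀ α β : D, β ≤ α → (G α ≃* G β))
    (hφ_id : ∀ (α : D) (x : G α), φ α α le_rfl x = x)
    (hφ_trans : ∀ {α β γ : D} (h1 : γ ≤ β) (h2 : β ≤ α) (x : G α),
      φ β γ h1 (φ α β h2 x) = φ α γ (h1.trans h2) x)
    :
    (∀ x : Σ α : D, G α, ∃ y : Σ α : D, G α, cMul φ (cMul φ x y) x = x) ∧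
    (∀ e : Σ α : D, G α, cMul φ e e = e →
      ∀ x : Σ α : D, G α, cMul φ e x = cMul φ x e) :=
  construction_mul_clifford_general φ hφ_id
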